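/- arXiv:2206.05942 — 2 statements merged into one kernel-verified Lean document; each statement's English description precedes it below -/
import Mathlib

section
/- The Gaussian mechanism M(D) = f(D) + N(0, σ²) applied to a function f with ℓ2-sensitivity Δ satisfies (Δ²/(2σ²))-zCDP. -/
/-!
For Gaussians of a common variance `v`, the likelihood ratio raised to the power `α` and
weighted by the second density is, after completing the square, the constant
`exp (α (α - 1) (μ₁ - μ₂)² / (2 v))` times the Gaussian density centred at `α μ₁ + (1 - α) μ₂`.
Integrating gives `R_α(N(μ₁, v) ‖ N(μ₂, v)) = α (μ₁ - μ₂)² / (2 v)`.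
-/

open MeasureTheory ProbabilityTheory

/-- The `α`-Rényi divergence between probability measures, via the
Radon–Nikodym derivative. -/
noncomputable def renyiDiv {Ω : Type*} [MeasurableSpace Ω] (α : ℝ)
    (P Q : Measure Ω) : ℝ :=
  (α - 1)⁻¹ * Real.log (∫ x, ((P.rnDeriv Q x).toReal) ^ α ∂Q)

/-- `ρ`-zero-concentrated differential privacy for a mechanism. -/
def zCDP {D Ω : Type*} [MeasurableSpace Ω] (Neighbor : D → D → Prop)
    (M : D → Measure Ω) (ρ : ℝ) : Prop :=
  ∀ d d', Neighbor d d' → ∀ α : ℝ, 1 < α → renyiDiv α (M d) (M d') ≤ ρ * α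

open Real
open scoped NNReal

lemma rnDeriv_gaussianReal_gaussianReal (μ₁ μ₂ : ℝ) (v₁ : ℝ≥0) {v₂ : ℝ≥0} (hv₂ : v₂ ≠ 0) :
    (gaussianReal μ₁ v₁).rnDeriv (gaussianReal μ₂ v₂) =ᵐ[gaussianReal μ₂ v₂]
      fun x ↦ ENNReal.ofReal (gaussianPDFReal μ₁ v₁ x / gaussianPDFReal μ₂ v₂ x) := by
  have hac : gaussianReal μ₂ v₂ ≪ volume := gaussianReal_absolutelyContinuous _ hv₂
  have h_right : (gaussianReal μ₁ v₁).rnDeriv (gaussianReal μ₂ v₂)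
      =ᵐ[volume] fun x ↦ (gaussianPDF μ₂ v₂ x)⁻¹ * (gaussianReal μ₁ v₁).rnDeriv volume x := by
    conv_lhs => rw [gaussianReal_of_var_ne_zero μ₂ hv₂]
    exact Measure.rnDeriv_withDensity_right _ _ (measurable_gaussianPDF μ₂ v₂).aemeasurable
      (ae_of_all _ fun x ↦ (gaussianPDF_pos μ₂ hv₂ x).ne')
      (ae_of_all _ fun _ ↦ ENNReal.ofReal_ne_top)
  filter_upwards [hac.ae_le h_right, hac.ae_le (rnDeriv_gaussianReal μ₁ v₁)] with x hx hx_vol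
  rw [hx, hx_vol, gaussianPDF, gaussianPDF,
    ENNReal.ofReal_div_of_pos (gaussianPDFReal_pos μ₂ v₂ x hv₂), div_eq_mul_inv, mul_comm]

lemma gaussianPDFReal_mul_div_rpow (μ₁ μ₂ α : ℝ) {v : ℝ≥0} (hv : v ≠ 0) (x : ℝ) :
    gaussianPDFReal μ₂ v x * (gaussianPDFReal μ₁ v x / gaussianPDFReal μ₂ v x) ^ α
      = exp (α * (α - 1) * (μ₁ - μ₂) ^ 2 / (2 * v))
        * gaussianPDFReal (α * μ₁ + (1 - α) * μ₂) v x := by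
  have hv_pos : (0 : ℝ) < v := NNReal.coe_pos.mpr hv.bot_lt
  simp only [gaussianPDFReal]
  rw [mul_div_mul_left _ _ (by positivity : (√(2 * π * v))⁻¹ ≠ 0),
    ← exp_sub, ← exp_mul, mul_assoc, ← exp_add, mul_left_comm, ← exp_add]
  congr 2
  field_simp
  ring

lemma integral_rnDeriv_gaussianReal_rpow (μ₁ μ₂ α : ℝ) {v : ℝ≥0} (hv : v ≠ 0) :
    ∫ x, ((gaussianReal μ₁ v).rnDeriv (gaussianReal μ₂ v) x).toReal ^ α ∂gaussianReal μ₂ v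
      = exp (α * (α - 1) * (μ₁ - μ₂) ^ 2 / (2 * v)) := by
  have h_ratio : ∫ x, ((gaussianReal μ₁ v).rnDeriv (gaussianReal μ₂ v) x).toReal ^ α
        ∂gaussianReal μ₂ v
      = ∫ x, (gaussianPDFReal μ₁ v x / gaussianPDFReal μ₂ v x) ^ α ∂gaussianReal μ₂ v := by
    refine integral_congr_ae ?_
    filter_upwards [rnDeriv_gaussianReal_gaussianReal μ₁ μ₂ v hv] with x hx
    rw [hx, ENNReal.toReal_ofReal
      (div_nonneg (gaussianPDFReal_nonneg _ _ _) (gaussianPDFReal_nonneg _ _ _))]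
  rw [h_ratio, gaussianReal_of_var_ne_zero _ hv,
    integral_withDensity_eq_integral_toReal_smul₀ (measurable_gaussianPDF μ₂ v).aemeasurable
      (ae_of_all _ fun _ ↦ ENNReal.ofReal_lt_top)]
  simp_rw [toReal_gaussianPDF, smul_eq_mul, gaussianPDFReal_mul_div_rpow μ₁ μ₂ α hv]
  rw [integral_const_mul, integral_gaussianPDFReal_eq_one _ hv, mul_one]

lemma renyiDiv_gaussianReal (μ₁ μ₂ : ℝ) {v : ℝ≥0} (hv : v ≠ 0) {α : ℝ} (hα : α ≠ 1) :
    renyiDiv α (gaussianReal μ₁ v) (gaussianReal μ₂ v) = α * (μ₁ - μ₂) ^ 2 / (2 * v) := by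
  have hα' : α - 1 ≠ 0 := sub_ne_zero.mpr hα
  rw [renyiDiv, integral_rnDeriv_gaussianReal_rpow _ _ _ hv, log_exp]
  field_simp

/-- The Gaussian mechanism `M(D) = f(D) + N(0, σ²)`, i.e. `M(D) ∼ N(f(D), σ²)`,
applied to a real-valued function `f` of sensitivity `Δ`, satisfies
`(Δ²/(2σ²))`-zCDP. -/
theorem gaussian_mechanism_zCDP {D : Type*} (Neighbor : D → D → Prop)
    (f : D → ℝ) (Δ : ℝ) (hΔ : ∀ d d', Neighbor d d' → |f d - f d'| ≤ Δ)
    (σ : ℝ) (hσ : 0 < σ) :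
    zCDP Neighbor (fun d => gaussianReal (f d) ((σ ^ 2).toNNReal))
      (Δ ^ 2 / (2 * σ ^ 2)) := by
  intro d d' hdd' α hα
  have hv : (σ ^ 2).toNNReal ≠ 0 := by positivity
  have h_sq : (f d - f d') ^ 2 ≤ Δ ^ 2 := sq_le_sq.mpr ((hΔ d d' hdd').trans (le_abs_self Δ))
  rw [renyiDiv_gaussianReal _ _ hv hα.ne', coe_toNNReal _ (by positivity)]
  calc α * (f d - f d') ^ 2 / (2 * σ ^ 2) ≤ α * Δ ^ 2 / (2 * σ ^ 2) := by gcongr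
    _ = Δ ^ 2 / (2 * σ ^ 2) * α := by ring
end

section
/- Let A, A' be probability vectors over the finite group universe X corresponding to datasets of N_G groups that differ by changing one individual's attributes in one group (so A and A' differ in at most two coordinates, each by 1/N_G, and group sizes are preserved: ⟨q_{φ_#}, A⟩ = ⟨q_{φ_#}, A'⟩). Then for an individual-level query f(A) = ⟨q_φ, A⟩/⟨q_{φ_#}, A⟩ with φ: X → {0,...,M} changing by at most 1 under the individual change, |f(A) − f(A')| ≤ 1/(N_G · s̄), where s̄ = ⟨q_{φ_#}, A⟩ ≥ 1 is the average group size; in particular |f(A) − f(A')| ≤ 1/N_I where N_I = N_G · s̄ is the total number of individuals. -/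
/-- Sensitivity of an individual-level query on the histogram representation:
if neighboring datasets move mass `1/N_G` from group type `x₀` to group type
`x₁` with the same size and with `|φ(x₀) − φ(x₁)| ≤ 1`, then the normalized
individual-level query changes by at most `1/(N_G·s̄) = 1/N_I`, where
`s̄ = ⟨q_{φ#}, A⟩` is the average group size. -/
theorem individual_query_sensitivity_histogram {X : Type*} [Fintype X]
    [DecidableEq X] (M : ℕ) (NG : ℕ) (hNG : 0 < NG)
    (φsharp : X → ℕ) (hφsharp : ∀ x, 1 ≤ φsharp x ∧ φsharp x ≤ M)
    (φ : X → ℕ) (hφ : ∀ x, φ x ≤ φsharp x)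
    (A A' : X → ℝ) (hA0 : ∀ x, 0 ≤ A x) (hA'0 : ∀ x, 0 ≤ A' x)
    (hA1 : ∑ x, A x = 1) (hA'1 : ∑ x, A' x = 1)
    (x₀ x₁ : X)
    (hmove : ∀ x, A' x =
      A x + (if x = x₁ then 1 / (NG : ℝ) else 0) - (if x = x₀ then 1 / (NG : ℝ) else 0))
    (hsize : φsharp x₀ = φsharp x₁)
    (hφchange : |(φ x₀ : ℝ) - (φ x₁ : ℝ)| ≤ 1)
    (hsizes : ∑ x, (φsharp x : ℝ) * A x = ∑ x, (φsharp x : ℝ) * A' x) :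
    |(∑ x, (φ x : ℝ) * A x) / (∑ x, (φsharp x : ℝ) * A x) -
        (∑ x, (φ x : ℝ) * A' x) / (∑ x, (φsharp x : ℝ) * A' x)| ≤
      1 / ((NG : ℝ) * ∑ x, (φsharp x : ℝ) * A x) := by
  set S : ℝ := ∑ x, (φsharp x : ℝ) * A x with hSdef
  have hNG' : (0 : ℝ) < NG := by exact_mod_cast hNG
  have hS1 : (1 : ℝ) ≤ S := by
    calc (1 : ℝ) = ∑ x, A x := hA1.symm
    _ ≤ S := Finset.sum_le_sum (fun x _ => by
        have h1 : (1 : ℝ) ≤ (φsharp x : ℝ) := by exact_mod_cast (hφsharp x).1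
        nlinarith [hA0 x])
  have hS0 : (0 : ℝ) < S := lt_of_lt_of_le one_pos hS1
  have hsum' : ∑ x, (φ x : ℝ) * A' x =
      (∑ x, (φ x : ℝ) * A x) + (φ x₁ : ℝ) / NG - (φ x₀ : ℝ) / NG := by
    simp only [hmove, mul_add, mul_sub, Finset.sum_add_distrib, Finset.sum_sub_distrib,
      mul_ite, mul_zero, Finset.sum_ite_eq', Finset.mem_univ, if_true]
    ring
  rw [← hsizes, hsum', div_sub_div_same]
  have : (∑ x, (φ x : ℝ) * A x) -
      ((∑ x, (φ x : ℝ) * A x) + (φ x₁ : ℝ) / NG - (φ x₀ : ℝ) / NG)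
      = ((φ x₀ : ℝ) - (φ x₁ : ℝ)) / NG := by ring
  rw [this, abs_div, abs_div, abs_of_pos hS0, abs_of_pos hNG', div_div]
  gcongr
end
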